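/- Let d be a cube-free positive integer (v_p(d) ≤ 2 for every prime p) with Ω(d) ≥ 2 and let q ≥ 5 be a prime with q ∤ d. Then Mref₄(d)/M₄(d) ≥ Mref₄(d·q)/M₄(d·q). -/
import Mathlib


open Real Finset

/-- The lower bound `M(d)` for the mass of a strongly square free quaternary lattice of
determinant `d` (Lemma 3.3(b)). -/
noncomputable def M4 (d : ℕ) : ℝ :=
  (1 / 2160) *
    (∏ p ∈ d.primeFactors.filter fun p => p ≠ 2 ∧ d.factorization p = 2,
      ((1 : ℝ) / 2) * (p : ℝ) ^ 2 * (((p : ℝ) - 1) / ((p : ℝ) + 1))) *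
    (∏ p ∈ d.primeFactors.filter fun p => p ≠ 2 ∧ d.factorization p = 1,
      ((1 : ℝ) / 2) * (p : ℝ) ^ ((3 : ℝ) / 2))

/-- The upper bound `Mref(d)` for the reflective part of the mass of a strongly square free
quaternary lattice of determinant `d` (Lemma 3.5(b)); `Ω` is realised by
`Nat.primeFactorsList.length` and `ω` by `Nat.primeFactors.card`. -/
noncomputable def Mref4 (d : ℕ) : ℝ :=
  3 * (4 : ℝ) ^ d.primeFactorsList.length / 16 +
    2 * (3 : ℝ) ^ d.primeFactorsList.length / 32 +
    (2 : ℝ) ^ d.primeFactorsList.length / 72 +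
    3 * (2 : ℝ) ^ d.primeFactorsList.length / 96 + 53 / 5760 +
    ∑ x ∈ d.divisors,
      (2 : ℝ) ^ (x.primeFactors.card + 1) * (1 / 4) * (2 / π) * (1 + Real.log x / 2) *
        (∏ p ∈ x.primeFactors.filter fun p => d.factorization p = 2,
          (2 * (p : ℝ)) / (2 * (p : ℝ) - 1)) *
        (∏ p ∈ x.primeFactors.filter fun p => d.factorization p = 1,
          ((1 : ℝ) / 2) * Real.sqrt p)

/- ### Auxiliary lemmas -/

private theorem key_ineq4 (q : ℝ) (hq : 5 ≤ q) :
    2 + 2 * Real.sqrt q + Real.sqrt q * Real.log q ≤ q * Real.sqrt q := by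
  have h0 : (0:ℝ) < q := by linarith
  have hs2 : (2:ℝ) ≤ Real.sqrt q := by
    rw [show (2:ℝ) = Real.sqrt 4 by
      rw [show (4:ℝ) = 2^2 by norm_num, Real.sqrt_sq (by norm_num)]]
    exact Real.sqrt_le_sqrt (by linarith)
  have hlog5 : Real.log q ≤ 50/27 + q/5 - 1 := by
    have h1 : Real.log q = Real.log 5 + Real.log (q/5) := by
      rw [← Real.log_mul (by norm_num) (by positivity)]
      ring_nf
    have h2 : Real.log (q/5) ≤ q/5 - 1 := Real.log_le_sub_one_of_pos (by positivity)
    have h3 : Real.log 5 ≤ 50/27 := by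
      have e1 : (2.7182818283 : ℝ) < Real.exp 1 := Real.exp_one_gt_d9
      have : Real.log 5 ≤ 5 / Real.exp 1 := by
        have h4 : Real.log 5 = 1 + Real.log (5 / Real.exp 1) := by
          rw [← Real.log_exp 1, ← Real.log_mul (Real.exp_ne_zero 1) (by positivity)]
          rw [Real.log_exp]
          congr 1
          field_simp
        have h5 : Real.log (5 / Real.exp 1) ≤ 5 / Real.exp 1 - 1 :=
          Real.log_le_sub_one_of_pos (by positivity)
        linarith
      calc Real.log 5 ≤ 5 / Real.exp 1 := this
        _ ≤ 5 / 2.7 := by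
          apply div_le_div_of_nonneg_left (by norm_num) (by norm_num) (by linarith)
        _ ≤ 50/27 := by norm_num
    linarith
  have hkey : 2 / Real.sqrt q ≤ q - 2 - Real.log q := by
    have h1 : 2 / Real.sqrt q ≤ 1 := by
      rw [div_le_one (by linarith)]; linarith
    have h2 : q - 2 - Real.log q ≥ 4*q/5 - 1 - 50/27 := by linarith
    nlinarith
  have hsq : 0 < Real.sqrt q := by linarith
  have := mul_le_mul_of_nonneg_left hkey (le_of_lt hsq)
  rw [mul_div_cancel₀ _ (ne_of_gt hsq)] at this
  nlinarith

private theorem sum_div_mul_prime {d q : ℕ} (hd : d ≠ 0) (hq : q.Prime) (hqd : ¬ q ∣ d)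
    (f : ℕ → ℝ) :
    ∑ x ∈ (d*q).divisors, f x = ∑ x ∈ d.divisors, (f x + f (x*q)) := by
  have hq0 : q ≠ 0 := hq.ne_zero
  have hset : (d*q).divisors = d.divisors ∪ d.divisors.image (· * q) := by
    ext x
    simp only [Nat.mem_divisors, Finset.mem_union, Finset.mem_image]
    constructor
    · rintro ⟨hx, -⟩
      by_cases hqx : q ∣ x
      · obtain ⟨y, rfl⟩ := hqx
        right
        refine ⟨y, ⟨?_, hd⟩, mul_comm y q⟩
        have : y * q ∣ d * q := by rwa [mul_comm q y] at hx
        exact (mul_dvd_mul_iff_right hq0).mp this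
      · left
        exact ⟨((hq.coprime_iff_not_dvd.mpr hqx).symm).dvd_of_dvd_mul_right hx, hd⟩
    · rintro (⟨hx, -⟩ | ⟨y, ⟨hy, -⟩, rfl⟩)
      · exact ⟨hx.mul_right q, mul_ne_zero hd hq0⟩
      · exact ⟨mul_dvd_mul hy dvd_rfl, mul_ne_zero hd hq0⟩
  have hdisj : Disjoint d.divisors (d.divisors.image (· * q)) := by
    rw [Finset.disjoint_left]
    rintro x hx hx'
    simp only [Finset.mem_image] at hx'
    obtain ⟨y, -, rfl⟩ := hx'
    exact hqd (dvd_trans (Dvd.intro_left y rfl) (Nat.mem_divisors.mp hx).1)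
  rw [hset, Finset.sum_union hdisj, Finset.sum_image
    (fun a _ b _ h => Nat.eq_of_mul_eq_mul_right (Nat.pos_of_ne_zero hq0) h),
    Finset.sum_add_distrib]

private theorem fact_mul_of_ne {d q : ℕ} (hd : d ≠ 0) (hq : q.Prime) {p : ℕ} (hp : p ≠ q) :
    (d * q).factorization p = d.factorization p := by
  rw [Nat.factorization_mul hd hq.ne_zero, Finsupp.add_apply, hq.factorization,
    Finsupp.single_apply, if_neg (fun h => hp h.symm), add_zero]

private theorem fact_mul_self {d q : ℕ} (hd : d ≠ 0) (hq : q.Prime) (hqd : ¬ q ∣ d) :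
    (d * q).factorization q = 1 := by
  rw [Nat.factorization_mul hd hq.ne_zero, Finsupp.add_apply, hq.factorization,
    Finsupp.single_apply, if_pos rfl, Nat.factorization_eq_zero_of_not_dvd hqd]

private theorem pf_mul {d q : ℕ} (hd : d ≠ 0) (hq : q.Prime) :
    (d * q).primeFactors = insert q d.primeFactors := by
  rw [Nat.primeFactors_mul hd hq.ne_zero, hq.primeFactors]
  ext p; simp [or_comm]

private theorem omega_mul {d q : ℕ} (hd : d ≠ 0) (hq : q.Prime) :
    (d * q).primeFactorsList.length = d.primeFactorsList.length + 1 := by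
  rw [(Nat.perm_primeFactorsList_mul hd hq.ne_zero).length_eq, List.length_append,
    Nat.primeFactorsList_prime hq]
  simp

set_option maxHeartbeats 4000000 in
/-- Lemma 3.6(b), second part: appending a new prime `q ≥ 5` to a cube-free determinant `d`
with `Ω(d) ≥ 2` does not increase the ratio `Mref/M` in dimension 4. -/
theorem ratio_le_append_prime_dim4 (d : ℕ) (hd : 0 < d)
    (hcf : ∀ p : ℕ, p.Prime → d.factorization p ≤ 2)
    (hΩ : 2 ≤ d.primeFactorsList.length) (q : ℕ) (hq : q.Prime) (hq5 : 5 ≤ q)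
    (hqd : ¬ q ∣ d) :
    Mref4 (d * q) / M4 (d * q) ≤ Mref4 d / M4 d := by
  have hd0 : d ≠ 0 := hd.ne'
  have hq0 : (0:ℝ) < (q:ℝ) := by positivity
  have hq5R : (5:ℝ) ≤ (q:ℝ) := by exact_mod_cast hq5
  have hq2 : q ≠ 2 := by omega
  have hqnotpf : q ∉ d.primeFactors := fun h => hqd (Nat.dvd_of_mem_primeFactors h)
  -- the scaling constant
  set s : ℝ := Real.sqrt (q:ℝ) with hs
  have hs2 : (2:ℝ) ≤ s := by
    rw [hs, show (2:ℝ) = Real.sqrt 4 by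
      rw [show (4:ℝ) = 2^2 by norm_num, Real.sqrt_sq (by norm_num)]]
    exact Real.sqrt_le_sqrt (by linarith)
  have hs0 : (0:ℝ) < s := by linarith
  set K : ℝ := (q:ℝ) * s / 2 with hK
  have hK4 : (4:ℝ) ≤ K := by rw [hK]; nlinarith
  have hK0 : (0:ℝ) < K := by linarith
  have hrpow : ((q:ℝ)) ^ ((3:ℝ)/2) = (q:ℝ) * s := by
    rw [hs, show ((3:ℝ)/2) = 1 + 1/2 by norm_num, Real.rpow_add hq0, Real.rpow_one,
      ← Real.sqrt_eq_rpow]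
  -- key inequality, restated
  have hkey : 1 + s * (1 + Real.log q / 2) ≤ K := by
    have := key_ineq4 (q:ℝ) hq5R
    rw [hK, hs]; nlinarith [this]
  have hlogq : 0 ≤ Real.log (q:ℝ) := Real.log_nonneg (by linarith)
  -- M4 is multiplied by exactly K
  have hM4 : M4 (d * q) = K * M4 d := by
    have h2 : ((d*q).primeFactors.filter fun p => p ≠ 2 ∧ (d*q).factorization p = 2)
        = d.primeFactors.filter fun p => p ≠ 2 ∧ d.factorization p = 2 := by
      ext p
      simp only [Finset.mem_filter, pf_mul hd0 hq, Finset.mem_insert]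
      constructor
      · rintro ⟨(rfl | hp), h2, h3⟩
        · rw [fact_mul_self hd0 hq hqd] at h3; omega
        · have hpq : p ≠ q := fun h => hqnotpf (h ▸ hp)
          exact ⟨hp, h2, by rwa [fact_mul_of_ne hd0 hq hpq] at h3⟩
      · rintro ⟨hp, h2, h3⟩
        have hpq : p ≠ q := fun h => hqnotpf (h ▸ hp)
        exact ⟨Or.inr hp, h2, by rwa [fact_mul_of_ne hd0 hq hpq]⟩
    have h1 : ((d*q).primeFactors.filter fun p => p ≠ 2 ∧ (d*q).factorization p = 1)
        = insert q (d.primeFactors.filter fun p => p ≠ 2 ∧ d.factorization p = 1) := by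
      ext p
      simp only [Finset.mem_filter, pf_mul hd0 hq, Finset.mem_insert]
      constructor
      · rintro ⟨(rfl | hp), h2, h3⟩
        · exact Or.inl rfl
        · have hpq : p ≠ q := fun h => hqnotpf (h ▸ hp)
          exact Or.inr ⟨hp, h2, by rwa [fact_mul_of_ne hd0 hq hpq] at h3⟩
      · rintro (rfl | ⟨hp, h2, h3⟩)
        · exact ⟨Or.inl rfl, hq2, fact_mul_self hd0 hq hqd⟩
        · have hpq : p ≠ q := fun h => hqnotpf (h ▸ hp)
          exact ⟨Or.inr hp, h2, by rwa [fact_mul_of_ne hd0 hq hpq]⟩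
    have hqnot : q ∉ d.primeFactors.filter fun p => p ≠ 2 ∧ d.factorization p = 1 :=
      fun h => hqnotpf (Finset.mem_filter.mp h).1
    rw [M4, M4, h2, h1, Finset.prod_insert hqnot, hrpow]
    ring
  -- positivity of M4 d
  have hM4pos : 0 < M4 d := by
    rw [M4]
    have hP2 : 0 < ∏ p ∈ d.primeFactors.filter fun p => p ≠ 2 ∧ d.factorization p = 2,
        ((1 : ℝ) / 2) * (p : ℝ) ^ 2 * (((p : ℝ) - 1) / ((p : ℝ) + 1)) := by
      apply Finset.prod_pos
      intro p hp
      obtain ⟨hp1, hp2, -⟩ := Finset.mem_filter.mp hp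
      have hprime := Nat.prime_of_mem_primeFactors hp1
      have h3 : 3 ≤ p := by have := hprime.two_le; omega
      have h3R : (3:ℝ) ≤ (p:ℝ) := by exact_mod_cast h3
      have : (0:ℝ) < (p:ℝ) - 1 := by linarith
      have : (0:ℝ) < (p:ℝ) + 1 := by linarith
      positivity
    have hP1 : 0 < ∏ p ∈ d.primeFactors.filter fun p => p ≠ 2 ∧ d.factorization p = 1,
        ((1 : ℝ) / 2) * (p : ℝ) ^ ((3 : ℝ) / 2) := by
      apply Finset.prod_pos
      intro p hp
      obtain ⟨hp1, -, -⟩ := Finset.mem_filter.mp hp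
      have hprime := Nat.prime_of_mem_primeFactors hp1
      have hp0 : (0:ℝ) < (p:ℝ) := by exact_mod_cast hprime.pos
      positivity
    exact mul_pos (mul_pos (by norm_num) hP2) hP1
  -- the main estimate : Mref4 (d*q) ≤ K * Mref4 d
  have hMref : Mref4 (d * q) ≤ K * Mref4 d := by
    rw [Mref4, Mref4, omega_mul hd0 hq,
      sum_div_mul_prime hd0 hq hqd (fun x =>
        (2 : ℝ) ^ (x.primeFactors.card + 1) * (1 / 4) * (2 / π) * (1 + Real.log x / 2) *
        (∏ p ∈ x.primeFactors.filter fun p => (d*q).factorization p = 2,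
          (2 * (p : ℝ)) / (2 * (p : ℝ) - 1)) *
        (∏ p ∈ x.primeFactors.filter fun p => (d*q).factorization p = 1,
          ((1 : ℝ) / 2) * Real.sqrt p))]
    set n := d.primeFactorsList.length with hn
    clear_value n
    -- bound the sum termwise
    have hsum : ∑ x ∈ d.divisors,
        ((2 : ℝ) ^ (x.primeFactors.card + 1) * (1 / 4) * (2 / π) * (1 + Real.log x / 2) *
          (∏ p ∈ x.primeFactors.filter fun p => (d*q).factorization p = 2,
            (2 * (p : ℝ)) / (2 * (p : ℝ) - 1)) *
          (∏ p ∈ x.primeFactors.filter fun p => (d*q).factorization p = 1,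
            ((1 : ℝ) / 2) * Real.sqrt p) +
         (2 : ℝ) ^ ((x*q).primeFactors.card + 1) * (1 / 4) * (2 / π) *
          (1 + Real.log ((x*q : ℕ) : ℝ) / 2) *
          (∏ p ∈ (x*q).primeFactors.filter fun p => (d*q).factorization p = 2,
            (2 * (p : ℝ)) / (2 * (p : ℝ) - 1)) *
          (∏ p ∈ (x*q).primeFactors.filter fun p => (d*q).factorization p = 1,
            ((1 : ℝ) / 2) * Real.sqrt p))
        ≤ K * ∑ x ∈ d.divisors,
          ((2 : ℝ) ^ (x.primeFactors.card + 1) * (1 / 4) * (2 / π) * (1 + Real.log x / 2) *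
          (∏ p ∈ x.primeFactors.filter fun p => d.factorization p = 2,
            (2 * (p : ℝ)) / (2 * (p : ℝ) - 1)) *
          (∏ p ∈ x.primeFactors.filter fun p => d.factorization p = 1,
            ((1 : ℝ) / 2) * Real.sqrt p)) := by
      rw [Finset.mul_sum]
      apply Finset.sum_le_sum
      intro x hx
      obtain ⟨hxd, -⟩ := Nat.mem_divisors.mp hx
      have hx0 : x ≠ 0 := by rintro rfl; exact hd0 (Nat.eq_zero_of_zero_dvd hxd)
      have hx1 : (1:ℝ) ≤ (x:ℝ) := by exact_mod_cast Nat.one_le_iff_ne_zero.mpr hx0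
      have hqnotx : q ∉ x.primeFactors :=
        fun h => hqd (dvd_trans (Nat.dvd_of_mem_primeFactors h) hxd)
      have hpfx : ∀ p ∈ x.primeFactors, p ≠ q := by
        intro p hp h; exact hqnotx (h ▸ hp)
      -- rewrite the filters
      have hfx : ∀ k : ℕ, (x.primeFactors.filter fun p => (d*q).factorization p = k)
          = x.primeFactors.filter fun p => d.factorization p = k := by
        intro k
        apply Finset.filter_congr
        intro p hp
        rw [fact_mul_of_ne hd0 hq (hpfx p hp)]
      have hpfxq : (x*q).primeFactors = insert q x.primeFactors := pf_mul hx0 hq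
      have hf2 : ((x*q).primeFactors.filter fun p => (d*q).factorization p = 2)
          = x.primeFactors.filter fun p => d.factorization p = 2 := by
        rw [hpfxq, Finset.filter_insert, if_neg (by rw [fact_mul_self hd0 hq hqd]; omega),
          hfx 2]
      have hf1 : ((x*q).primeFactors.filter fun p => (d*q).factorization p = 1)
          = insert q (x.primeFactors.filter fun p => d.factorization p = 1) := by
        rw [hpfxq, Finset.filter_insert, if_pos (fact_mul_self hd0 hq hqd), hfx 1]
      have hcard : (x*q).primeFactors.card = x.primeFactors.card + 1 := by
        rw [hpfxq, Finset.card_insert_of_notMem hqnotx]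
      have hlogxq : Real.log ((x*q : ℕ) : ℝ) = Real.log x + Real.log q := by
        push_cast
        rw [Real.log_mul (by linarith) (by linarith)]
      have hqnotf : q ∉ x.primeFactors.filter fun p => d.factorization p = 1 :=
        fun h => hqnotx (Finset.mem_filter.mp h).1
      rw [hfx 2, hfx 1, hf2, hf1, hcard, hlogxq, Finset.prod_insert hqnotf]
      -- now pure inequality
      set P2 : ℝ := ∏ p ∈ x.primeFactors.filter fun p => d.factorization p = 2,
        (2 * (p : ℝ)) / (2 * (p : ℝ) - 1) with hP2def
      set P1 : ℝ := ∏ p ∈ x.primeFactors.filter fun p => d.factorization p = 1,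
        ((1 : ℝ) / 2) * Real.sqrt p with hP1def
      have hP2 : 0 ≤ P2 := by
        apply Finset.prod_nonneg
        intro p hp
        have hprime := Nat.prime_of_mem_primeFactors (Finset.mem_filter.mp hp).1
        have h2 : (2:ℝ) ≤ (p:ℝ) := by exact_mod_cast hprime.two_le
        have : (0:ℝ) < 2 * (p:ℝ) - 1 := by linarith
        positivity
      have hP1 : 0 ≤ P1 := by
        apply Finset.prod_nonneg
        intro p hp
        positivity
      have hlogx : 0 ≤ Real.log (x:ℝ) := Real.log_nonneg hx1
      clear_value P2 P1
      set A : ℝ := (2 : ℝ) ^ (x.primeFactors.card + 1) * (1 / 4) * (2 / π) * P2 * P1 with hA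
      have hApos : 0 ≤ A := by
        rw [hA]
        exact mul_nonneg (mul_nonneg (mul_nonneg (mul_nonneg (by positivity)
          (by norm_num)) (by positivity)) hP2) hP1
      clear_value A
      have hgoal : A * (1 + Real.log x / 2) + A * s * (1 + (Real.log x + Real.log q) / 2)
          ≤ K * (A * (1 + Real.log x / 2)) := by
        have h1 : (1 + Real.log x / 2) + s * (1 + (Real.log x + Real.log q) / 2)
            ≤ K * (1 + Real.log x / 2) := by
          have hmul := mul_le_mul_of_nonneg_right hkey
            (show (0:ℝ) ≤ 1 + Real.log x / 2 by linarith)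
          have hprod : 0 ≤ s * (Real.log q * Real.log x) :=
            mul_nonneg hs0.le (mul_nonneg hlogq hlogx)
          nlinarith [hmul, hprod]
        nlinarith [mul_le_mul_of_nonneg_left h1 hApos]
      calc (2 : ℝ) ^ (x.primeFactors.card + 1) * (1 / 4) * (2 / π) *
              (1 + Real.log x / 2) * P2 * P1 +
            (2 : ℝ) ^ (x.primeFactors.card + 1 + 1) * (1 / 4) * (2 / π) *
              (1 + (Real.log x + Real.log q) / 2) * P2 *
              ((1 / 2) * Real.sqrt q * P1)
          = A * (1 + Real.log x / 2) + A * s * (1 + (Real.log x + Real.log q) / 2) := by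
            rw [hA, hs]; ring
        _ ≤ K * (A * (1 + Real.log x / 2)) := hgoal
        _ = K * ((2 : ℝ) ^ (x.primeFactors.card + 1) * (1 / 4) * (2 / π) *
              (1 + Real.log x / 2) * P2 * P1) := by rw [hA]; ring
    -- combine with the constant terms
    have hT4 : (0:ℝ) ≤ 3 * (4 : ℝ) ^ n / 16 := by positivity
    have hT3 : (0:ℝ) ≤ 2 * (3 : ℝ) ^ n / 32 := by positivity
    have hT2 : (0:ℝ) ≤ (2 : ℝ) ^ n / 72 := by positivity
    have hT2' : (0:ℝ) ≤ 3 * (2 : ℝ) ^ n / 96 := by positivity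
    have e4 : 3 * (4 : ℝ) ^ (n+1) / 16 = 4 * (3 * (4 : ℝ) ^ n / 16) := by ring
    have e3 : 2 * (3 : ℝ) ^ (n+1) / 32 = 3 * (2 * (3 : ℝ) ^ n / 32) := by ring
    have e2 : (2 : ℝ) ^ (n+1) / 72 = 2 * ((2 : ℝ) ^ n / 72) := by ring
    have e2' : 3 * (2 : ℝ) ^ (n+1) / 96 = 2 * (3 * (2 : ℝ) ^ n / 96) := by ring
    have b4 : 4 * (3 * (4 : ℝ) ^ n / 16) ≤ K * (3 * (4 : ℝ) ^ n / 16) :=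
      mul_le_mul_of_nonneg_right hK4 hT4
    have b3 : 3 * (2 * (3 : ℝ) ^ n / 32) ≤ K * (2 * (3 : ℝ) ^ n / 32) :=
      mul_le_mul_of_nonneg_right (by linarith) hT3
    have b2 : 2 * ((2 : ℝ) ^ n / 72) ≤ K * ((2 : ℝ) ^ n / 72) :=
      mul_le_mul_of_nonneg_right (by linarith) hT2
    have b2' : 2 * (3 * (2 : ℝ) ^ n / 96) ≤ K * (3 * (2 : ℝ) ^ n / 96) :=
      mul_le_mul_of_nonneg_right (by linarith) hT2'
    have bE : (53:ℝ) / 5760 ≤ K * (53 / 5760) := by nlinarith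
    rw [e4, e3, e2, e2']
    linarith [hsum]
  -- conclude
  rw [hM4, div_le_div_iff₀ (mul_pos hK0 hM4pos) hM4pos]
  calc Mref4 (d * q) * M4 d ≤ (K * Mref4 d) * M4 d := by
        exact mul_le_mul_of_nonneg_right hMref hM4pos.le
    _ = Mref4 d * (K * M4 d) := by ring
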